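/- Let d ≥ 2, let {e_n}_{n=1}^{N} be a family of N mutually unbiased orthonormal bases of ℂ^d with projections Π_{nk}, let ψ ∈ ℂ^d be a unit vector that is mutually coherent with respect to these N MUBs (|⟨e_n(k), ψ⟩|² = 1/d for all n, k), and let ρ = Σ_{n,k} λ_{nk} Π_{nk} + r·|ψ⟩⟨ψ| with real coefficients λ_{nk} and a real number r, such that tr(ρ) = 1. Then the probabilities p_{nk} = tr(Π_{nk} ρ) satisfy Σ_{n=1}^{N} Σ_{k=1}^{d} p_{nk}² = tr(ρ²) + (N−1)/d − r²(d−1)/d. -/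

import Mathlib

open scoped BigOperators

/-- Rank-one orthogonal projection `|v⟩⟨v|` onto a vector `v ∈ ℂ^d`, as a matrix. -/
noncomputable def proj {d : ℕ} (v : EuclideanSpace ℂ (Fin d)) : Matrix (Fin d) (Fin d) ℂ :=
  Matrix.of fun i j => v i * star (v j)

/-- A family of orthonormal bases of `ℂ^d` is mutually unbiased if
`|⟨e n k, e m l⟩|² = 1/d` for all `n ≠ m` and all `k, l`. -/
def MutuallyUnbiased {d N : ℕ} (e : Fin N → Fin d → EuclideanSpace ℂ (Fin d)) : Prop :=
  ∀ n m : Fin N, n ≠ m → ∀ k l : Fin d,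
    ‖(inner ℂ (e n k) (e m l) : ℂ)‖ ^ 2 = 1 / d

/-!
The Gram matrix of the projections is explicit: `re tr (Π_{nk} Π_{ml}) = |⟨e n k, e m l⟩|²` is
`δ_kl` inside a basis, `1/d` across bases and `1/d` against `ψ`. Hence, using `tr ρ = 1`,
`p_{nk} = λ_{nk} + (1 - ∑_l λ_{nl}) / d`, so `∑_k p_{nk} = 1`, and expanding one factor of
`tr ρ²` gives `∑ λ_{nk} p_{nk} + r tr (Π_ψ ρ)`. Both sides of the identity then reduce to
`∑ λ_{nk} p_{nk}` plus explicit terms in `∑ λ_{nk}` and `r`.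
-/

open Finset

section Projections

variable {d : ℕ}

theorem trace_proj (v : EuclideanSpace ℂ (Fin d)) : (proj v).trace = (‖v‖ : ℂ) ^ 2 := by
  have h : (proj v).trace = inner ℂ v v := by
    simp only [Matrix.trace, Matrix.diag, proj, Matrix.of_apply, PiLp.inner_apply,
      RCLike.inner_apply, starRingEnd_apply]
  rw [h, inner_self_eq_norm_sq_to_K]
  rfl

theorem re_trace_proj_mul_proj (v w : EuclideanSpace ℂ (Fin d)) :
    ((proj v * proj w).trace).re = ‖(inner ℂ v w : ℂ)‖ ^ 2 := by
  have h : (proj v * proj w).trace = inner ℂ w v * inner ℂ v w := by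
    simp only [Matrix.trace, Matrix.diag, Matrix.mul_apply, proj, Matrix.of_apply,
      PiLp.inner_apply, RCLike.inner_apply, starRingEnd_apply, sum_mul_sum]
    exact sum_congr rfl fun i _ => sum_congr rfl fun j _ => by ring
  rw [h, ← inner_conj_symm, mul_comm, Complex.mul_conj, Complex.ofReal_re,
    Complex.normSq_eq_norm_sq]

variable {N : ℕ}

noncomputable def projCombination (e : Fin N → Fin d → EuclideanSpace ℂ (Fin d))
    (lam : Fin N → Fin d → ℝ) (r : ℝ) (ψ : EuclideanSpace ℂ (Fin d)) :
    Matrix (Fin d) (Fin d) ℂ :=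
  (∑ n : Fin N, ∑ k : Fin d, (lam n k : ℂ) • proj (e n k)) + (r : ℂ) • proj ψ

variable (e : Fin N → Fin d → EuclideanSpace ℂ (Fin d)) (lam : Fin N → Fin d → ℝ) (r : ℝ)
  (ψ : EuclideanSpace ℂ (Fin d))

theorem trace_projCombination :
    (projCombination e lam r ψ).trace =
      ((∑ n, ∑ k, lam n k * ‖e n k‖ ^ 2 + r * ‖ψ‖ ^ 2 : ℝ) : ℂ) := by
  simp only [projCombination, Matrix.trace_add, Matrix.trace_sum, Matrix.trace_smul,
    trace_proj, smul_eq_mul]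
  push_cast
  rfl

theorem re_trace_proj_mul_projCombination (a : EuclideanSpace ℂ (Fin d)) :
    ((proj a * projCombination e lam r ψ).trace).re =
      ∑ n, ∑ k, lam n k * ‖(inner ℂ a (e n k) : ℂ)‖ ^ 2 + r * ‖(inner ℂ a ψ : ℂ)‖ ^ 2 := by
  simp only [projCombination, mul_add, mul_sum, Matrix.mul_smul, Matrix.trace_add,
    Matrix.trace_sum, Matrix.trace_smul, smul_eq_mul, Complex.add_re, Complex.re_sum,
    Complex.re_ofReal_mul, re_trace_proj_mul_proj]

theorem re_trace_projCombination_mul_self :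
    ((projCombination e lam r ψ * projCombination e lam r ψ).trace).re =
      ∑ n, ∑ k, lam n k * ((proj (e n k) * projCombination e lam r ψ).trace).re +
        r * ((proj ψ * projCombination e lam r ψ).trace).re := by
  conv_lhs => enter [1, 1, 1]; rw [projCombination]
  simp only [add_mul, sum_mul, smul_mul_assoc, Matrix.trace_add, Matrix.trace_sum,
    Matrix.trace_smul, smul_eq_mul, Complex.add_re, Complex.re_sum, Complex.re_ofReal_mul]

theorem re_trace_proj_mul_projCombination_self_of_coherent (hψ : ‖ψ‖ = 1)
    (hcoh : ∀ n k, ‖(inner ℂ (e n k) ψ : ℂ)‖ ^ 2 = 1 / d) :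
    ((proj ψ * projCombination e lam r ψ).trace).re = (∑ n, ∑ k, lam n k) / d + r := by
  have hcoh' (n : Fin N) (k : Fin d) : ‖(inner ℂ ψ (e n k) : ℂ)‖ ^ 2 = 1 / d := by
    rw [← inner_conj_symm, RCLike.norm_conj, hcoh]
  rw [re_trace_proj_mul_projCombination, inner_self_eq_norm_sq_to_K, hψ]
  simp [hcoh', ← sum_mul, div_eq_mul_inv]

end Projections

namespace MutuallyUnbiased

variable {d N : ℕ} {e : Fin N → Fin d → EuclideanSpace ℂ (Fin d)}

theorem norm_inner_sq (horth : ∀ n, Orthonormal ℂ (e n)) (hmub : MutuallyUnbiased e)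
    (n m : Fin N) (k l : Fin d) :
    ‖(inner ℂ (e n k) (e m l) : ℂ)‖ ^ 2 =
      if n = m then (if k = l then 1 else 0) else 1 / (d : ℝ) := by
  split_ifs with hnm hkl
  · subst hnm hkl
    simp [(horth n).1 k]
  · subst hnm
    simp [(horth n).2 hkl]
  · exact hmub n m hnm k l

theorem sum_mul_norm_inner_sq (horth : ∀ n, Orthonormal ℂ (e n)) (hmub : MutuallyUnbiased e)
    (lam : Fin N → Fin d → ℝ) (n : Fin N) (k : Fin d) :
    ∑ m, ∑ l, lam m l * ‖(inner ℂ (e n k) (e m l) : ℂ)‖ ^ 2 =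
      lam n k + (∑ m, ∑ l, lam m l - ∑ l, lam n l) / d := by
  have hrow (m : Fin N) : ∑ l, lam m l * ‖(inner ℂ (e n k) (e m l) : ℂ)‖ ^ 2 =
      (if n = m then lam m k - (∑ l, lam m l) / d else 0) + (∑ l, lam m l) / d := by
    simp only [norm_inner_sq horth hmub]
    split_ifs with hnm
    · simp [mul_ite, sum_ite_eq]
    · simp only [mul_one_div, zero_add, sum_div]
  simp only [hrow, sum_add_distrib, sum_ite_eq, mem_univ, if_true, ← sum_div]
  ring

theorem re_trace_proj_mul_projCombination_of_coherent (horth : ∀ n, Orthonormal ℂ (e n))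
    (hmub : MutuallyUnbiased e) {ψ : EuclideanSpace ℂ (Fin d)}
    (hcoh : ∀ n k, ‖(inner ℂ (e n k) ψ : ℂ)‖ ^ 2 = 1 / d) {lam : Fin N → Fin d → ℝ} {r : ℝ}
    (htr : ∑ n, ∑ k, lam n k + r = 1) (n : Fin N) (k : Fin d) :
    ((proj (e n k) * projCombination e lam r ψ).trace).re = lam n k + (1 - ∑ l, lam n l) / d := by
  rw [re_trace_proj_mul_projCombination, sum_mul_norm_inner_sq horth hmub, hcoh]
  linear_combination htr / (d : ℝ)

end MutuallyUnbiased

theorem Finset.sum_sq_eq_sum_mul_add {ι : Type*} (s : Finset ι) (p a : ι → ℝ) (c : ℝ)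
    (hp : ∀ i ∈ s, p i = a i + c) (hsum : ∑ i ∈ s, p i = 1) :
    ∑ i ∈ s, p i ^ 2 = ∑ i ∈ s, a i * p i + c := by
  calc ∑ i ∈ s, p i ^ 2 = ∑ i ∈ s, (a i * p i + c * p i) :=
        sum_congr rfl fun i hi => by rw [sq]; nth_rw 1 [hp i hi]; ring
    _ = ∑ i ∈ s, a i * p i + c := by rw [sum_add_distrib, ← mul_sum, hsum, mul_one]

theorem stmt_15_general (d N : ℕ)
    (e : Fin N → Fin d → EuclideanSpace ℂ (Fin d))
    (horth : ∀ n, Orthonormal ℂ (e n))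
    (hmub : MutuallyUnbiased e)
    (ψ : EuclideanSpace ℂ (Fin d)) (hψ : ‖ψ‖ = 1)
    (hcoh : ∀ (n : Fin N) (k : Fin d), ‖(inner ℂ (e n k) ψ : ℂ)‖ ^ 2 = 1 / d)
    (lam : Fin N → Fin d → ℝ) (r : ℝ)
    (ρ : Matrix (Fin d) (Fin d) ℂ)
    (hρ : ρ = (∑ n : Fin N, ∑ k : Fin d, (lam n k : ℂ) • proj (e n k)) + (r : ℂ) • proj ψ)
    (htr : ρ.trace = 1)
    (p : Fin N → Fin d → ℝ)
    (hp : ∀ n k, p n k = ((proj (e n k) * ρ).trace).re) :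
    ∑ n : Fin N, ∑ k : Fin d, (p n k) ^ 2 =
      ((ρ * ρ).trace).re + ((N : ℝ) - 1) / d - r ^ 2 * ((d : ℝ) - 1) / d := by
  obtain rfl : ρ = projCombination e lam r ψ := hρ
  have hd : (d : ℝ) ≠ 0 := by
    rintro hd
    obtain rfl : d = 0 := by exact_mod_cast hd
    simp [Subsingleton.elim ψ 0] at hψ
  have htr' : ∑ n, ∑ k, lam n k + r = 1 := by
    rw [trace_projCombination, Complex.ofReal_eq_one] at htr
    simpa [(horth _).1 _, hψ] using htr
  have hp' (n : Fin N) (k : Fin d) : p n k = lam n k + (1 - ∑ l, lam n l) / d :=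
    (hp n k).trans (hmub.re_trace_proj_mul_projCombination_of_coherent horth hcoh htr' n k)
  have hpsum (n : Fin N) : ∑ k, p n k = 1 := by
    simp only [hp', sum_add_distrib, sum_const, card_univ, Fintype.card_fin, nsmul_eq_mul]
    field_simp
    ring
  rw [re_trace_projCombination_mul_self,
    re_trace_proj_mul_projCombination_self_of_coherent e lam r ψ hψ hcoh]
  simp only [← hp, fun n => univ.sum_sq_eq_sum_mul_add _ _ _ (fun k _ => hp' n k) (hpsum n)]
  rw [sum_add_distrib, ← sum_div, sum_sub_distrib, sum_const, card_univ, Fintype.card_fin,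
    nsmul_eq_mul, mul_one]
  field_simp
  linear_combination (-r - 1) * htr'

theorem stmt_15 (d N : ℕ) (hd : 2 ≤ d)
    (e : Fin N → Fin d → EuclideanSpace ℂ (Fin d))
    (horth : ∀ n, Orthonormal ℂ (e n))
    (hmub : MutuallyUnbiased e)
    (ψ : EuclideanSpace ℂ (Fin d)) (hψ : ‖ψ‖ = 1)
    (hcoh : ∀ (n : Fin N) (k : Fin d), ‖(inner ℂ (e n k) ψ : ℂ)‖ ^ 2 = 1 / d)
    (lam : Fin N → Fin d → ℝ) (r : ℝ)
    (ρ : Matrix (Fin d) (Fin d) ℂ)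
    (hρ : ρ = (∑ n : Fin N, ∑ k : Fin d, (lam n k : ℂ) • proj (e n k)) + (r : ℂ) • proj ψ)
    (htr : ρ.trace = 1)
    (p : Fin N → Fin d → ℝ)
    (hp : ∀ n k, p n k = ((proj (e n k) * ρ).trace).re) :
    ∑ n : Fin N, ∑ k : Fin d, (p n k) ^ 2 =
      ((ρ * ρ).trace).re + ((N : ℝ) - 1) / d - r ^ 2 * ((d : ℝ) - 1) / d :=
  stmt_15_general d N e horth hmub ψ hψ hcoh lam r ρ hρ htr p hp
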